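/- arXiv:2505.17269 — 7 statements merged into one kernel-verified Lean document; each statement's English description precedes it below -/
import Mathlib

section
/- Positive invariance of the nonnegative orthant for the cholera metapopulation model: Let n ≥ 1 and let S, I, R, W : [0,∞) → ℝ^n be differentiable functions solving the cholera metapopulation system for all t ≥ 0. If the initial conditions satisfy S_i(0) > 0 for every i, and I_i(0) ≥ 0, R_i(0) ≥ 0, W_i(0) ≥ 0 for every i, then for all t ≥ 0 and every i = 1,…,n one has S_i(t) > 0, I_i(t) ≥ 0, R_i(t) ≥ 0 and W_i(t) ≥ 0. -/
/-!
On `[0, T]` the solution is bounded by some `C`. Suppose that at time `t` the smallest of the `4n`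
coordinates equals `-r < 0` and is attained at coordinate `k`. Then the `k`-th right-hand side is
at least `-K r`: the movement matrices have nonnegative off-diagonal entries, so
`∑ⱼ Mₖⱼ yⱼ ≥ (∑ⱼ Mₖⱼ) yₖ`, and every other term is nonnegative or at least `-r` times a constant
depending on `C` (it is linear in `yₖ = -r`, or it has a nonnegative coefficient and a factor
`≥ -r` whose cofactor is bounded by `C`). Hence no coordinate can cross the barrier
`-ε e^{(K+1)t}`, and letting `ε → 0` gives nonnegativity. Strict positivity of `S` then follows
from Grönwall's inequality applied to `S_i' ≥ -L S_i`.
-/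

open Set Filter Topology Real

theorem HasDerivWithinAt.eventually_pos_nhdsGT {g : ℝ → ℝ} {g' t : ℝ}
    (hg : HasDerivWithinAt g g' (Ici t) t) (h0 : g t = 0) (hpos : 0 < g') :
    ∀ᶠ s in 𝓝[>] t, 0 < g s := by
  have hslope : ∀ᶠ s in 𝓝[>] t, 0 < slope g t s :=
    (hasDerivWithinAt_iff_tendsto_slope' (lt_irrefl t)).1 hg.Ioi_of_Ici
      (eventually_gt_nhds hpos)
  filter_upwards [hslope, self_mem_nhdsWithin] with s hs (hts : t < s)
  rw [slope_def_field, h0, sub_zero] at hs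
  exact (div_pos_iff_of_pos_right (sub_pos.2 hts)).1 hs

theorem nonneg_of_deriv_right_pos_boundary {ι : Type*} [Finite ι] {g g' : ℝ → ι → ℝ} {a b : ℝ}
    (hcont : ∀ i, ContinuousOn (g · i) (Icc a b))
    (hderiv : ∀ t ∈ Ico a b, ∀ i, HasDerivWithinAt (g · i) (g' t i) (Ici t) t)
    (ha : ∀ i, 0 ≤ g a i)
    (hboundary : ∀ t ∈ Ico a b, (∀ j, 0 ≤ g t j) → ∀ i, g t i = 0 → 0 < g' t i) :
    ∀ t ∈ Icc a b, ∀ i, 0 ≤ g t i := by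
  have hclosed : IsClosed ({t | ∀ i, 0 ≤ g t i} ∩ Icc a b) := by
    rw [inter_comm]
    exact isClosed_Icc.isClosed_le continuousOn_const (continuousOn_pi.2 hcont)
  refine hclosed.Icc_subset_of_forall_mem_nhdsWithin ha fun t ⟨ht, htI⟩ => ?_
  refine eventually_all.2 fun i => ?_
  rcases (ht i).eq_or_lt with h | h
  · exact ((hderiv t htI i).eventually_pos_nhdsGT h.symm
      (hboundary t htI ht i h.symm)).mono fun _ => le_of_lt
  · exact ((hderiv t htI i).continuousWithinAt.mono Ioi_subset_Ici_self
      |>.eventually (eventually_gt_nhds h)).mono fun _ => le_of_lt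

theorem nonneg_of_quasipositive {ι : Type*} [Finite ι] {x f : ℝ → ι → ℝ} {a b : ℝ}
    (hcont : ∀ i, ContinuousOn (x · i) (Icc a b))
    (hderiv : ∀ t ∈ Ico a b, ∀ i, HasDerivWithinAt (x · i) (f t i) (Ici t) t)
    (ha : ∀ i, 0 ≤ x a i)
    (hquasi : ∀ i, ∃ κ, ∀ t ∈ Ico a b, ∀ r > 0, (∀ j, -r ≤ x t j) → x t i = -r →
      -(κ * r) ≤ f t i) :
    ∀ t ∈ Icc a b, ∀ i, 0 ≤ x t i := by
  choose κ hκ using hquasi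
  obtain ⟨K, hK⟩ := Finite.exists_le κ
  -- Where `x` first meets the barrier `-ε e^{(K+1)t} = -r`, `x' ≥ -K r > -(K+1) r` (its slope).
  have hbarrier : ∀ ε > 0, ∀ t ∈ Icc a b, ∀ i, -(ε * exp ((K + 1) * t)) ≤ x t i := by
    intro ε hε
    have hψ (t : ℝ) : HasDerivAt (fun s => ε * exp ((K + 1) * s))
        ((K + 1) * (ε * exp ((K + 1) * t))) t :=
      (((hasDerivAt_id' t).const_mul (K + 1)).exp.const_mul ε).congr_deriv (by ring)
    have := nonneg_of_deriv_right_pos_boundary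
      (g := fun t i => x t i + ε * exp ((K + 1) * t))
      (fun i => (hcont i).add fun s _ => (hψ s).continuousAt.continuousWithinAt)
      (fun t ht i => (hderiv t ht i).add (hψ t).hasDerivWithinAt)
      (fun i => by have := ha i; positivity)
      (fun t ht hge i hi => by
        have hr : 0 < ε * exp ((K + 1) * t) := by positivity
        have := hκ i t ht _ hr (fun j => by linarith [hge j]) (by linarith)
        have := mul_le_mul_of_nonneg_right (hK i) hr.le
        linarith)
    exact fun t ht i => by linarith [this t ht i]
  intro t ht i
  refine le_of_forall_pos_le_add fun δ hδ => ?_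
  have := hbarrier (δ / exp ((K + 1) * t)) (by positivity) t ht i
  rw [div_mul_cancel₀ _ (exp_pos _).ne'] at this
  linarith

theorem pos_of_deriv_right_ge_neg_mul {y y' : ℝ → ℝ} {L a b : ℝ}
    (hcont : ContinuousOn y (Icc a b))
    (hderiv : ∀ t ∈ Ico a b, HasDerivWithinAt y (y' t) (Ici t) t)
    (hbound : ∀ t ∈ Ico a b, -(L * y t) ≤ y' t) (ha : 0 < y a) :
    ∀ t ∈ Icc a b, 0 < y t := by
  intro t ht
  have := le_gronwallBound_of_liminf_deriv_right_le (f := -y) (f' := -y') (K := -L) (ε := 0)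
    hcont.neg (fun s hs r hr => (hderiv s hs).neg.liminf_right_slope_le hr) le_rfl
    (fun s hs => by simp only [Pi.neg_apply]; linarith [hbound s hs]) t ht
  rw [gronwallBound_ε0] at this
  simp only [Pi.neg_apply] at this
  linarith [mul_pos ha (exp_pos (-L * (t - a)))]

theorem sum_mul_le_sum_mul_of_min {ι : Type*} [Fintype ι] {m y : ι → ℝ} {i : ι}
    (hoff : ∀ j, j ≠ i → 0 ≤ m j) (hmin : ∀ j, y i ≤ y j) :
    (∑ j, m j) * y i ≤ ∑ j, m j * y j := by
  rw [Finset.sum_mul]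
  refine Finset.sum_le_sum fun j _ => ?_
  rcases eq_or_ne j i with rfl | hj
  · exact le_rfl
  · exact mul_le_mul_of_nonneg_left (hmin j) (hoff j hj)

theorem mul_le_sum_mul_of_nonneg {ι : Type*} [Fintype ι] {m y : ι → ℝ} {i : ι}
    (hoff : ∀ j, j ≠ i → 0 ≤ m j) (hy : ∀ j, 0 ≤ y j) :
    m i * y i ≤ ∑ j, m j * y j := by
  classical
  rw [← Finset.add_sum_erase _ _ (Finset.mem_univ i)]
  exact le_add_of_nonneg_right <| Finset.sum_nonneg fun j hj =>
    mul_nonneg (hoff j (Finset.ne_of_mem_erase hj)) (hy j)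

theorem neg_mul_le_mul_of_abs_le {r C u w : ℝ} (hr : 0 ≤ r) (hu : -r ≤ u) (hw : -r ≤ w)
    (huC : |u| ≤ C) (hwC : |w| ≤ C) : -(r * C) ≤ u * w := by
  have hC : 0 ≤ C := (abs_nonneg u).trans huC
  obtain ⟨-, hu'⟩ := abs_le.1 huC
  obtain ⟨-, hw'⟩ := abs_le.1 hwC
  rcases le_or_gt 0 u with h | h <;> rcases le_or_gt 0 w with h' | h' <;> nlinarith

theorem abs_mul_le_abs_mul_of_abs_le (c : ℝ) {u C : ℝ} (hu : |u| ≤ C) : |c * u| ≤ |c| * C :=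
  (abs_mul c u).trans_le <| mul_le_mul_of_nonneg_left hu (abs_nonneg c)

section CholeraModel

variable {n : ℕ}

/-- The indices `inl (inl i)`, `inl (inr i)`, `inr (inl i)`, `inr (inr i)` stand for the
compartments `S_i`, `I_i`, `R_i`, `W_i`. -/
abbrev Compartment (n : ℕ) := (Fin n ⊕ Fin n) ⊕ (Fin n ⊕ Fin n)

def choleraState (S I R W : Fin n → ℝ) : Compartment n → ℝ :=
  Sum.elim (Sum.elim S I) (Sum.elim R W)

variable (b dH v ε γ δ ζ dC βI βW : Fin n → ℝ) (MS MI MR MW : Matrix (Fin n) (Fin n) ℝ)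

def choleraField (S I R W : Fin n → ℝ) : Compartment n → ℝ :=
  choleraState
    (fun i => b i + ε i * R i - (βI i * I i + βW i * W i) * S i - (v i + dH i) * S i
      + ∑ j, MS i j * S j)
    (fun i => (βI i * I i + βW i * W i) * S i - (γ i + δ i + dH i) * I i + ∑ j, MI i j * I j)
    (fun i => γ i * I i + v i * S i - (ε i + dH i) * R i + ∑ j, MR i j * R j)
    (fun i => ζ i * I i - dC i * W i + ∑ j, MW i j * W j)

variable {b dH v ε γ δ ζ dC βI βW MS MI MR MW}

section

variable {S I R W : Fin n → ℝ} {r C : ℝ} (i : Fin n)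

theorem choleraField_S_ge (hb : ∀ i, 0 ≤ b i) (hε : ∀ i, 0 ≤ ε i)
    (hMSoff : ∀ i j, i ≠ j → 0 ≤ MS i j) (hr : 0 ≤ r) (hS : ∀ j, -r ≤ S j) (hSi : S i = -r)
    (hR : -r ≤ R i) (hI : |I i| ≤ C) (hW : |W i| ≤ C) :
    -((ε i + (|βI i| + |βW i|) * C + |v i + dH i| + |∑ j, MS i j|) * r) ≤
      choleraField b dH v ε γ δ ζ dC βI βW MS MI MR MW S I R W (.inl (.inl i)) := by
  have hM := sum_mul_le_sum_mul_of_min (fun j hj => hMSoff i j hj.symm) (fun j => hSi ▸ hS j)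
  have hεR := mul_le_mul_of_nonneg_left hR (hε i)
  have hβ := mul_le_mul_of_nonneg_right
    (add_le_add (abs_le.1 (abs_mul_le_abs_mul_of_abs_le (βI i) hI)).1
      (abs_le.1 (abs_mul_le_abs_mul_of_abs_le (βW i) hW)).1) hr
  have hvd := mul_le_mul_of_nonneg_right (neg_abs_le (v i + dH i)) hr
  have hsum := mul_le_mul_of_nonneg_right (le_abs_self (∑ j, MS i j)) hr
  simp only [choleraField, choleraState, Sum.elim_inl]
  rw [hSi] at hM ⊢
  linarith [hb i]

theorem choleraField_I_ge (hβW : ∀ i, 0 ≤ βW i) (hMIoff : ∀ i j, i ≠ j → 0 ≤ MI i j)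
    (hr : 0 ≤ r) (hI : ∀ j, -r ≤ I j) (hIi : I i = -r) (hS : -r ≤ S i) (hW : -r ≤ W i)
    (hSC : |S i| ≤ C) (hWC : |W i| ≤ C) :
    -((|βI i| * C + βW i * C + |γ i + δ i + dH i| + |∑ j, MI i j|) * r) ≤
      choleraField b dH v ε γ δ ζ dC βI βW MS MI MR MW S I R W (.inl (.inr i)) := by
  have hM := sum_mul_le_sum_mul_of_min (fun j hj => hMIoff i j hj.symm) (fun j => hIi ▸ hI j)
  have hβI :=
    mul_le_mul_of_nonneg_right (abs_le.1 (abs_mul_le_abs_mul_of_abs_le (βI i) hSC)).2 hr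
  have hβW := mul_le_mul_of_nonneg_left (neg_mul_le_mul_of_abs_le hr hW hS hWC hSC) (hβW i)
  have hloss := mul_le_mul_of_nonneg_right (neg_abs_le (γ i + δ i + dH i)) hr
  have hsum := mul_le_mul_of_nonneg_right (le_abs_self (∑ j, MI i j)) hr
  simp only [choleraField, choleraState, Sum.elim_inl, Sum.elim_inr]
  rw [hIi] at hM ⊢
  linarith

theorem choleraField_R_ge (hv : ∀ i, 0 ≤ v i) (hγ : ∀ i, 0 ≤ γ i)
    (hMRoff : ∀ i j, i ≠ j → 0 ≤ MR i j) (hr : 0 ≤ r) (hR : ∀ j, -r ≤ R j) (hRi : R i = -r)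
    (hI : -r ≤ I i) (hS : -r ≤ S i) :
    -((γ i + v i + |ε i + dH i| + |∑ j, MR i j|) * r) ≤
      choleraField b dH v ε γ δ ζ dC βI βW MS MI MR MW S I R W (.inr (.inl i)) := by
  have hM := sum_mul_le_sum_mul_of_min (fun j hj => hMRoff i j hj.symm) (fun j => hRi ▸ hR j)
  have hγI := mul_le_mul_of_nonneg_left hI (hγ i)
  have hvS := mul_le_mul_of_nonneg_left hS (hv i)
  have hloss := mul_le_mul_of_nonneg_right (neg_abs_le (ε i + dH i)) hr
  have hsum := mul_le_mul_of_nonneg_right (le_abs_self (∑ j, MR i j)) hr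
  simp only [choleraField, choleraState, Sum.elim_inl, Sum.elim_inr]
  rw [hRi] at hM ⊢
  linarith

theorem choleraField_W_ge (hζ : ∀ i, 0 ≤ ζ i) (hMWoff : ∀ i j, i ≠ j → 0 ≤ MW i j)
    (hr : 0 ≤ r) (hW : ∀ j, -r ≤ W j) (hWi : W i = -r) (hI : -r ≤ I i) :
    -((ζ i + |dC i| + |∑ j, MW i j|) * r) ≤
      choleraField b dH v ε γ δ ζ dC βI βW MS MI MR MW S I R W (.inr (.inr i)) := by
  have hM := sum_mul_le_sum_mul_of_min (fun j hj => hMWoff i j hj.symm) (fun j => hWi ▸ hW j)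
  have hζI := mul_le_mul_of_nonneg_left hI (hζ i)
  have hloss := mul_le_mul_of_nonneg_right (neg_abs_le (dC i)) hr
  have hsum := mul_le_mul_of_nonneg_right (le_abs_self (∑ j, MW i j)) hr
  simp only [choleraField, choleraState, Sum.elim_inr]
  rw [hWi] at hM ⊢
  linarith

theorem choleraField_S_ge_of_nonneg (hb : ∀ i, 0 ≤ b i) (hε : ∀ i, 0 ≤ ε i)
    (hMSoff : ∀ i j, i ≠ j → 0 ≤ MS i j) (hS : ∀ j, 0 ≤ S j) (hR : 0 ≤ R i)
    (hI : |I i| ≤ C) (hW : |W i| ≤ C) :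
    -(((|βI i| + |βW i|) * C + |v i + dH i| + |MS i i|) * S i) ≤
      choleraField b dH v ε γ δ ζ dC βI βW MS MI MR MW S I R W (.inl (.inl i)) := by
  have hM := mul_le_sum_mul_of_nonneg (i := i) (fun j hj => hMSoff i j hj.symm) hS
  have hεR := mul_nonneg (hε i) hR
  have hβS := mul_le_mul_of_nonneg_right
    (add_le_add (abs_le.1 (abs_mul_le_abs_mul_of_abs_le (βI i) hI)).2
      (abs_le.1 (abs_mul_le_abs_mul_of_abs_le (βW i) hW)).2) (hS i)
  have hvd := mul_le_mul_of_nonneg_right (le_abs_self (v i + dH i)) (hS i)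
  have hMii := mul_le_mul_of_nonneg_right (neg_abs_le (MS i i)) (hS i)
  simp only [choleraField, choleraState, Sum.elim_inl]
  linarith [hb i]

end

theorem choleraField_quasipositive (hb : ∀ i, 0 ≤ b i) (hv : ∀ i, 0 ≤ v i)
    (hε : ∀ i, 0 ≤ ε i) (hγ : ∀ i, 0 ≤ γ i) (hζ : ∀ i, 0 ≤ ζ i) (hβW : ∀ i, 0 ≤ βW i)
    (hMSoff : ∀ i j, i ≠ j → 0 ≤ MS i j) (hMIoff : ∀ i j, i ≠ j → 0 ≤ MI i j)
    (hMRoff : ∀ i j, i ≠ j → 0 ≤ MR i j) (hMWoff : ∀ i j, i ≠ j → 0 ≤ MW i j)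
    (C : ℝ) (k : Compartment n) :
    ∃ κ, ∀ S I R W : Fin n → ℝ, (∀ l, |choleraState S I R W l| ≤ C) → ∀ r > 0,
      (∀ l, -r ≤ choleraState S I R W l) → choleraState S I R W k = -r →
      -(κ * r) ≤ choleraField b dH v ε γ δ ζ dC βI βW MS MI MR MW S I R W k := by
  rcases k with (i | i) | (i | i)
  · exact ⟨_, fun S I R W hC r hr hge hk => choleraField_S_ge i hb hε hMSoff hr.le
      (fun j => hge (.inl (.inl j))) hk (hge (.inr (.inl i))) (hC (.inl (.inr i)))
      (hC (.inr (.inr i)))⟩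
  · exact ⟨_, fun S I R W hC r hr hge hk => choleraField_I_ge i hβW hMIoff hr.le
      (fun j => hge (.inl (.inr j))) hk (hge (.inl (.inl i))) (hge (.inr (.inr i)))
      (hC (.inl (.inl i))) (hC (.inr (.inr i)))⟩
  · exact ⟨_, fun S I R W _ r hr hge hk => choleraField_R_ge i hv hγ hMRoff hr.le
      (fun j => hge (.inr (.inl j))) hk (hge (.inl (.inr i))) (hge (.inl (.inl i)))⟩
  · exact ⟨_, fun S I R W _ r hr hge hk => choleraField_W_ge i hζ hMWoff hr.le
      (fun j => hge (.inr (.inr j))) hk (hge (.inl (.inr i)))⟩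

end CholeraModel

theorem cholera_positive_invariance_general
    (n : ℕ)
    (b dH v ε γ δ ζ dC βI βW : Fin n → ℝ)
    (hb : ∀ i, 0 ≤ b i) (hv : ∀ i, 0 ≤ v i)
    (hε : ∀ i, 0 ≤ ε i) (hγ : ∀ i, 0 ≤ γ i)
    (hζ : ∀ i, 0 ≤ ζ i)
    (hβW : ∀ i, 0 ≤ βW i)
    (MS MI MR MW : Matrix (Fin n) (Fin n) ℝ)
    (hMSoff : ∀ i j, i ≠ j → 0 ≤ MS i j)
    (hMIoff : ∀ i j, i ≠ j → 0 ≤ MI i j)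
    (hMRoff : ∀ i j, i ≠ j → 0 ≤ MR i j)
    (hMWoff : ∀ i j, i ≠ j → 0 ≤ MW i j)
    (S I R W : ℝ → Fin n → ℝ)
    (hS : ∀ t, 0 ≤ t → ∀ i, HasDerivWithinAt (fun τ => S τ i)
      (b i + ε i * R t i - (βI i * I t i + βW i * W t i) * S t i
        - (v i + dH i) * S t i + ∑ j, MS i j * S t j) (Set.Ici (0:ℝ)) t)
    (hI : ∀ t, 0 ≤ t → ∀ i, HasDerivWithinAt (fun τ => I τ i)
      ((βI i * I t i + βW i * W t i) * S t i - (γ i + δ i + dH i) * I t i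
        + ∑ j, MI i j * I t j) (Set.Ici (0:ℝ)) t)
    (hR : ∀ t, 0 ≤ t → ∀ i, HasDerivWithinAt (fun τ => R τ i)
      (γ i * I t i + v i * S t i - (ε i + dH i) * R t i
        + ∑ j, MR i j * R t j) (Set.Ici (0:ℝ)) t)
    (hW : ∀ t, 0 ≤ t → ∀ i, HasDerivWithinAt (fun τ => W τ i)
      (ζ i * I t i - dC i * W t i + ∑ j, MW i j * W t j) (Set.Ici (0:ℝ)) t)
    (hS0 : ∀ i, 0 < S 0 i) (hI0 : ∀ i, 0 ≤ I 0 i)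
    (hR0 : ∀ i, 0 ≤ R 0 i) (hW0 : ∀ i, 0 ≤ W 0 i) :
    ∀ t, 0 ≤ t → ∀ i, 0 < S t i ∧ 0 ≤ I t i ∧ 0 ≤ R t i ∧ 0 ≤ W t i := by
  intro T hT
  set x : ℝ → Compartment n → ℝ := fun t => choleraState (S t) (I t) (R t) (W t)
  have hx : ∀ t, 0 ≤ t → ∀ k, HasDerivWithinAt (x · k)
      (choleraField b dH v ε γ δ ζ dC βI βW MS MI MR MW (S t) (I t) (R t) (W t) k) (Ici 0) t := by
    rintro t ht ((i | i) | (i | i))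
    exacts [hS t ht i, hI t ht i, hR t ht i, hW t ht i]
  have hcont : ∀ k, ContinuousOn (x · k) (Icc 0 T) := fun k t ht =>
    (hx t ht.1 k).continuousWithinAt.mono Icc_subset_Ici_self
  have hderiv : ∀ t ∈ Ico 0 T, ∀ k, HasDerivWithinAt (x · k) _ (Ici t) t := fun t ht k =>
    (hx t ht.1 k).mono (Ici_subset_Ici.2 ht.1)
  obtain ⟨C, hC⟩ := isCompact_Icc.exists_bound_of_continuousOn (continuousOn_pi.2 hcont)
  have hxC : ∀ t ∈ Icc 0 T, ∀ k, |x t k| ≤ C := fun t ht k =>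
    (norm_le_pi_norm (x t) k).trans (hC t ht)
  have hnonneg := nonneg_of_quasipositive hcont hderiv
    (by rintro ((i | i) | (i | i)); exacts [(hS0 i).le, hI0 i, hR0 i, hW0 i])
    fun k => (choleraField_quasipositive hb hv hε hγ hζ hβW hMSoff hMIoff hMRoff hMWoff C k).imp
      fun κ hκ t ht r hr hge hk => hκ _ _ _ _ (hxC t (Ico_subset_Icc_self ht)) r hr hge hk
  have hT' : T ∈ Icc 0 T := ⟨hT, le_rfl⟩
  intro i
  have hSpos := pos_of_deriv_right_ge_neg_mul (hcont (.inl (.inl i))) (fun t ht => hderiv t ht _)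
    (fun t ht => have ht := Ico_subset_Icc_self ht
      choleraField_S_ge_of_nonneg i hb hε hMSoff (fun j => hnonneg t ht (.inl (.inl j)))
        (hnonneg t ht (.inr (.inl i))) (hxC t ht (.inl (.inr i))) (hxC t ht (.inr (.inr i))))
    (hS0 i)
  exact ⟨hSpos T hT', hnonneg T hT' (.inl (.inr i)), hnonneg T hT' (.inr (.inl i)),
    hnonneg T hT' (.inr (.inr i))⟩

/-- Positive invariance of the nonnegative orthant for the cholera
metapopulation model. -/
theorem cholera_positive_invariance
    (n : ℕ) (hn : 1 ≤ n)
    (b dH v ε γ δ ζ dC βI βW : Fin n → ℝ)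
    (hb : ∀ i, 0 ≤ b i) (hdH : ∀ i, 0 < dH i) (hv : ∀ i, 0 ≤ v i)
    (hε : ∀ i, 0 ≤ ε i) (hγ : ∀ i, 0 ≤ γ i) (hδ : ∀ i, 0 ≤ δ i)
    (hζ : ∀ i, 0 ≤ ζ i) (hdC : ∀ i, 0 < dC i)
    (hβI : ∀ i, 0 ≤ βI i) (hβW : ∀ i, 0 ≤ βW i)
    (MS MI MR MW : Matrix (Fin n) (Fin n) ℝ)
    (hMSoff : ∀ i j, i ≠ j → 0 ≤ MS i j) (hMScol : ∀ j, ∑ i, MS i j = 0)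
    (hMIoff : ∀ i j, i ≠ j → 0 ≤ MI i j) (hMIcol : ∀ j, ∑ i, MI i j = 0)
    (hMRoff : ∀ i j, i ≠ j → 0 ≤ MR i j) (hMRcol : ∀ j, ∑ i, MR i j = 0)
    (hMWoff : ∀ i j, i ≠ j → 0 ≤ MW i j) (hMWcol : ∀ j, ∑ i, MW i j = 0)
    (S I R W : ℝ → Fin n → ℝ)
    (hS : ∀ t, 0 ≤ t → ∀ i, HasDerivWithinAt (fun τ => S τ i)
      (b i + ε i * R t i - (βI i * I t i + βW i * W t i) * S t i
        - (v i + dH i) * S t i + ∑ j, MS i j * S t j) (Set.Ici (0:ℝ)) t)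
    (hI : ∀ t, 0 ≤ t → ∀ i, HasDerivWithinAt (fun τ => I τ i)
      ((βI i * I t i + βW i * W t i) * S t i - (γ i + δ i + dH i) * I t i
        + ∑ j, MI i j * I t j) (Set.Ici (0:ℝ)) t)
    (hR : ∀ t, 0 ≤ t → ∀ i, HasDerivWithinAt (fun τ => R τ i)
      (γ i * I t i + v i * S t i - (ε i + dH i) * R t i
        + ∑ j, MR i j * R t j) (Set.Ici (0:ℝ)) t)
    (hW : ∀ t, 0 ≤ t → ∀ i, HasDerivWithinAt (fun τ => W τ i)
      (ζ i * I t i - dC i * W t i + ∑ j, MW i j * W t j) (Set.Ici (0:ℝ)) t)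
    (hS0 : ∀ i, 0 < S 0 i) (hI0 : ∀ i, 0 ≤ I 0 i)
    (hR0 : ∀ i, 0 ≤ R 0 i) (hW0 : ∀ i, 0 ≤ W 0 i) :
    ∀ t, 0 ≤ t → ∀ i, 0 < S t i ∧ 0 ≤ I t i ∧ 0 ≤ R t i ∧ 0 ≤ W t i :=
  cholera_positive_invariance_general n b dH v ε γ δ ζ dC βI βW hb hv hε hγ hζ hβW MS MI MR MW
    hMSoff hMIoff hMRoff hMWoff S I R W hS hI hR hW hS0 hI0 hR0 hW0
end

section
/- Boundedness of the total human population: Let n ≥ 1 and let S, I, R, W : [0,∞) → ℝ^n be differentiable functions solving the cholera metapopulation system for all t ≥ 0, and suppose S_i(t) ≥ 0, I_i(t) ≥ 0, R_i(t) ≥ 0, W_i(t) ≥ 0 for all t ≥ 0 and all i. Let B = Σ_{i=1}^n b_i, let d_min = min_{i=1,…,n} d_i^H (which is positive), and let T_H(t) = Σ_{i=1}^n (S_i(t) + I_i(t) + R_i(t)). Then for all t ≥ 0, T_H(t) ≤ max( T_H(0), B / d_min ). -/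
/-!
Summing the S, I and R equations over all patches, the infection and vaccination terms cancel,
the movement terms vanish because every movement matrix has zero column sums, and what remains
is `T_H' = B - Σ dᴴᵢ (Sᵢ + Iᵢ + Rᵢ) - Σ δᵢ Iᵢ ≤ B - d_min T_H` on the nonnegative cone.
Grönwall's inequality with the negative rate `-d_min` then bounds `T_H(t)` by a convex
combination of `T_H(0)` and `B / d_min`.
-/

open Set

theorem Matrix.sum_sum_mul_eq_zero_of_sum_col_eq_zero {ι : Type*} [Fintype ι]
    (M : Matrix ι ι ℝ) (hcol : ∀ j, ∑ i, M i j = 0) (x : ι → ℝ) :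
    ∑ i, ∑ j, M i j * x j = 0 := by
  rw [Finset.sum_comm]
  exact Finset.sum_eq_zero fun j _ => by rw [← Finset.sum_mul, hcol, zero_mul]

theorem gronwallBound_le_max_of_neg {δ K ε x : ℝ} (hK : K < 0) (hx : 0 ≤ x) :
    gronwallBound δ K ε x ≤ max δ (-ε / K) := by
  have hexp_le_one : Real.exp (K * x) ≤ 1 :=
    Real.exp_le_one_iff.mpr (mul_nonpos_of_nonpos_of_nonneg hK.le hx)
  calc gronwallBound δ K ε x
      = δ * Real.exp (K * x) + (-ε / K) * (1 - Real.exp (K * x)) := by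
        rw [gronwallBound_of_K_ne_0 hK.ne]; ring
    _ ≤ max δ (-ε / K) * Real.exp (K * x) + max δ (-ε / K) * (1 - Real.exp (K * x)) := by
        gcongr
        · exact le_max_left _ _
        · exact le_max_right _ _
    _ = max δ (-ε / K) := by ring

theorem le_max_of_hasDerivWithinAt_le_sub_mul {f f' : ℝ → ℝ} {B d : ℝ} (hd : 0 < d)
    (hf : ∀ t ∈ Ici (0 : ℝ), HasDerivWithinAt f (f' t) (Ici 0) t)
    (bound : ∀ t ∈ Ici (0 : ℝ), f' t ≤ B - d * f t) :
    ∀ t ∈ Ici (0 : ℝ), f t ≤ max (f 0) (B / d) := by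
  intro t ht
  have hcont : ContinuousOn f (Icc 0 t) := fun x hx =>
    ((hf x hx.1).continuousWithinAt).mono Icc_subset_Ici_self
  have hgronwall := le_gronwallBound_of_liminf_deriv_right_le (f := f) (f' := f')
    (δ := f 0) (K := -d) (ε := B) hcont
    (fun x hx _ hr =>
      ((hf x hx.1).mono (Ici_subset_Ici.mpr hx.1)).liminf_right_slope_le hr)
    le_rfl (fun x hx => by linarith [bound x hx.1]) t ⟨ht, le_rfl⟩
  rw [sub_zero] at hgronwall
  calc f t ≤ _ := hgronwall
    _ ≤ max (f 0) (-B / -d) := gronwallBound_le_max_of_neg (neg_neg_of_pos hd) ht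
    _ = max (f 0) (B / d) := by rw [neg_div_neg_eq]

theorem sum_human_rates_le {ι : Type*} [Fintype ι]
    (b dH v ε γ δ βI βW : ι → ℝ) (hδ : ∀ i, 0 ≤ δ i) (MS MI MR : Matrix ι ι ℝ)
    (hMScol : ∀ j, ∑ i, MS i j = 0) (hMIcol : ∀ j, ∑ i, MI i j = 0)
    (hMRcol : ∀ j, ∑ i, MR i j = 0) (s x r w : ι → ℝ)
    (hs : ∀ i, 0 ≤ s i) (hx : ∀ i, 0 ≤ x i) (hr : ∀ i, 0 ≤ r i)
    (dmin : ℝ) (hdmin_le : ∀ i, dmin ≤ dH i) :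
    ∑ i, ((b i + ε i * r i - (βI i * x i + βW i * w i) * s i
        - (v i + dH i) * s i + ∑ j, MS i j * s j)
      + ((βI i * x i + βW i * w i) * s i - (γ i + δ i + dH i) * x i
        + ∑ j, MI i j * x j)
      + (γ i * x i + v i * s i - (ε i + dH i) * r i + ∑ j, MR i j * r j))
      ≤ ∑ i, b i - dmin * ∑ i, (s i + x i + r i) := by
  calc _ = ∑ i, (b i - dH i * (s i + x i + r i) - δ i * x i)
        + (∑ i, ∑ j, MS i j * s j + ∑ i, ∑ j, MI i j * x j + ∑ i, ∑ j, MR i j * r j) := by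
        rw [← Finset.sum_add_distrib, ← Finset.sum_add_distrib, ← Finset.sum_add_distrib]
        exact Finset.sum_congr rfl fun i _ => by ring
    _ = ∑ i, (b i - dH i * (s i + x i + r i) - δ i * x i) := by
        rw [MS.sum_sum_mul_eq_zero_of_sum_col_eq_zero hMScol,
          MI.sum_sum_mul_eq_zero_of_sum_col_eq_zero hMIcol,
          MR.sum_sum_mul_eq_zero_of_sum_col_eq_zero hMRcol, add_zero, add_zero, add_zero]
    _ ≤ ∑ i, (b i - dmin * (s i + x i + r i)) := by
        refine Finset.sum_le_sum fun i _ => ?_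
        have hmort : dmin * (s i + x i + r i) ≤ dH i * (s i + x i + r i) :=
          mul_le_mul_of_nonneg_right (hdmin_le i) (by linarith [hs i, hx i, hr i])
        linarith [mul_nonneg (hδ i) (hx i)]
    _ = ∑ i, b i - dmin * ∑ i, (s i + x i + r i) := by
        rw [Finset.sum_sub_distrib, Finset.mul_sum]

theorem cholera_total_human_population_bounded_general
    (n : ℕ)
    (b dH v ε γ δ βI βW : Fin n → ℝ)
    (hdH : ∀ i, 0 < dH i)
    (hδ : ∀ i, 0 ≤ δ i)
    (MS MI MR : Matrix (Fin n) (Fin n) ℝ)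
    (hMScol : ∀ j, ∑ i, MS i j = 0)
    (hMIcol : ∀ j, ∑ i, MI i j = 0)
    (hMRcol : ∀ j, ∑ i, MR i j = 0)
    (S I R W : ℝ → Fin n → ℝ)
    (hS : ∀ t, 0 ≤ t → ∀ i, HasDerivWithinAt (fun τ => S τ i)
      (b i + ε i * R t i - (βI i * I t i + βW i * W t i) * S t i
        - (v i + dH i) * S t i + ∑ j, MS i j * S t j) (Set.Ici (0:ℝ)) t)
    (hI : ∀ t, 0 ≤ t → ∀ i, HasDerivWithinAt (fun τ => I τ i)
      ((βI i * I t i + βW i * W t i) * S t i - (γ i + δ i + dH i) * I t i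
        + ∑ j, MI i j * I t j) (Set.Ici (0:ℝ)) t)
    (hR : ∀ t, 0 ≤ t → ∀ i, HasDerivWithinAt (fun τ => R τ i)
      (γ i * I t i + v i * S t i - (ε i + dH i) * R t i
        + ∑ j, MR i j * R t j) (Set.Ici (0:ℝ)) t)
    (hnonneg : ∀ t, 0 ≤ t → ∀ i,
      0 ≤ S t i ∧ 0 ≤ I t i ∧ 0 ≤ R t i ∧ 0 ≤ W t i)
    (dmin : ℝ) (hdmin_le : ∀ i, dmin ≤ dH i) (hdmin_mem : ∃ i, dH i = dmin) :
    ∀ t, 0 ≤ t →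
      ∑ i, (S t i + I t i + R t i) ≤
        max (∑ i, (S 0 i + I 0 i + R 0 i)) ((∑ i, b i) / dmin) := by
  obtain ⟨i₀, rfl⟩ := hdmin_mem
  refine le_max_of_hasDerivWithinAt_le_sub_mul (hdH i₀)
    (fun t ht => HasDerivWithinAt.fun_sum fun i _ =>
      ((hS t ht i).add (hI t ht i)).add (hR t ht i))
    (fun t ht => ?_)
  have hSIR := hnonneg t ht
  exact sum_human_rates_le b dH v ε γ δ βI βW hδ MS MI MR hMScol hMIcol hMRcol
    (S t) (I t) (R t) (W t) (fun i => (hSIR i).1) (fun i => (hSIR i).2.1)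
    (fun i => (hSIR i).2.2.1) (dH i₀) hdmin_le

/-- Boundedness of the total human population in the cholera
metapopulation model. -/
theorem cholera_total_human_population_bounded
    (n : ℕ) (hn : 1 ≤ n)
    (b dH v ε γ δ ζ dC βI βW : Fin n → ℝ)
    (hb : ∀ i, 0 ≤ b i) (hdH : ∀ i, 0 < dH i) (hv : ∀ i, 0 ≤ v i)
    (hε : ∀ i, 0 ≤ ε i) (hγ : ∀ i, 0 ≤ γ i) (hδ : ∀ i, 0 ≤ δ i)
    (hζ : ∀ i, 0 ≤ ζ i) (hdC : ∀ i, 0 < dC i)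
    (hβI : ∀ i, 0 ≤ βI i) (hβW : ∀ i, 0 ≤ βW i)
    (MS MI MR MW : Matrix (Fin n) (Fin n) ℝ)
    (hMSoff : ∀ i j, i ≠ j → 0 ≤ MS i j) (hMScol : ∀ j, ∑ i, MS i j = 0)
    (hMIoff : ∀ i j, i ≠ j → 0 ≤ MI i j) (hMIcol : ∀ j, ∑ i, MI i j = 0)
    (hMRoff : ∀ i j, i ≠ j → 0 ≤ MR i j) (hMRcol : ∀ j, ∑ i, MR i j = 0)
    (hMWoff : ∀ i j, i ≠ j → 0 ≤ MW i j) (hMWcol : ∀ j, ∑ i, MW i j = 0)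
    (S I R W : ℝ → Fin n → ℝ)
    (hS : ∀ t, 0 ≤ t → ∀ i, HasDerivWithinAt (fun τ => S τ i)
      (b i + ε i * R t i - (βI i * I t i + βW i * W t i) * S t i
        - (v i + dH i) * S t i + ∑ j, MS i j * S t j) (Set.Ici (0:ℝ)) t)
    (hI : ∀ t, 0 ≤ t → ∀ i, HasDerivWithinAt (fun τ => I τ i)
      ((βI i * I t i + βW i * W t i) * S t i - (γ i + δ i + dH i) * I t i
        + ∑ j, MI i j * I t j) (Set.Ici (0:ℝ)) t)
    (hR : ∀ t, 0 ≤ t → ∀ i, HasDerivWithinAt (fun τ => R τ i)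
      (γ i * I t i + v i * S t i - (ε i + dH i) * R t i
        + ∑ j, MR i j * R t j) (Set.Ici (0:ℝ)) t)
    (hW : ∀ t, 0 ≤ t → ∀ i, HasDerivWithinAt (fun τ => W τ i)
      (ζ i * I t i - dC i * W t i + ∑ j, MW i j * W t j) (Set.Ici (0:ℝ)) t)
    (hnonneg : ∀ t, 0 ≤ t → ∀ i,
      0 ≤ S t i ∧ 0 ≤ I t i ∧ 0 ≤ R t i ∧ 0 ≤ W t i)
    (dmin : ℝ) (hdmin_le : ∀ i, dmin ≤ dH i) (hdmin_mem : ∃ i, dH i = dmin) :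
    ∀ t, 0 ≤ t →
      ∑ i, (S t i + I t i + R t i) ≤
        max (∑ i, (S 0 i + I 0 i + R 0 i)) ((∑ i, b i) / dmin) :=
  cholera_total_human_population_bounded_general n b dH v ε γ δ βI βW hdH hδ MS MI MR hMScol hMIcol
    hMRcol S I R W hS hI hR hnonneg dmin hdmin_le hdmin_mem
end

section
/- Convergence of the total human population under equal movement rates: Let n ≥ 1, let M be an n×n real movement matrix (nonnegative off-diagonal entries and zero column sums), and let D = diag(d_1^H, …, d_n^H) with d_i^H > 0 for all i. Then the matrix D − M is invertible. Moreover, for any constant vector c ∈ ℝ^n, every differentiable function N : [0,∞) → ℝ^n satisfying N'(t) = c − (D − M) N(t) for all t ≥ 0 converges as t → ∞ to (D − M)^{-1} c. -/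
/-! With `A = D - M`, the off-diagonal entries of `A` are `≤ 0` and its column sums are the
`dH j ≥ δ > 0`. Hence for every `x` and every `σ` with `|σ i| ≤ 1` and `σ i * x i = |x i|`,
`δ * ‖x‖₁ ≤ σ ⬝ᵥ A x`. Taking `σ = sign x` shows that `A` is injective. For `x = N - A⁻¹ c`,
which solves `x' = -A x`, a suitable such `σ` makes `-σ ⬝ᵥ A x` a right derivative of `‖x‖₁`,
so Grönwall's inequality gives `‖x t‖₁ ≤ e^{-δ t} ‖x 0‖₁`. -/

open Filter Topology Set Matrix

theorem exists_pos_forall_le_of_pos {ι : Type*} [Finite ι] {f : ι → ℝ} (hf : ∀ i, 0 < f i) :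
    ∃ δ, 0 < δ ∧ ∀ i, δ ≤ f i :=
  ((eventually_mem_nhdsWithin (a := 0) (s := Ioi 0)).and
    (eventually_all.2 fun i => (eventually_le_nhds (hf i)).filter_mono nhdsWithin_le_nhds)).exists

theorem abs_sign_le_one (x : ℝ) : |(SignType.sign x : ℝ)| ≤ 1 := by
  rcases lt_trichotomy x 0 with h | rfl | h <;> simp [*]

/-- At a zero of `g` the sign `σ` is taken from `g'`; this is why only a right derivative of
`|g|` is claimed. -/
theorem exists_hasDerivWithinAt_abs_Ici {g : ℝ → ℝ} {g' t : ℝ}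
    (h : HasDerivWithinAt g g' (Ici t) t) :
    ∃ σ : ℝ, |σ| ≤ 1 ∧ σ * g t = |g t| ∧
      HasDerivWithinAt (fun z => |g z|) (σ * g') (Ici t) t := by
  by_cases h0 : g t = 0
  · refine ⟨SignType.sign g', abs_sign_le_one g', by simp [h0], ?_⟩
    rw [sign_mul_self, hasDerivWithinAt_iff_tendsto_slope]
    refine (hasDerivWithinAt_iff_tendsto_slope.1 h).abs.congr' ?_
    filter_upwards [self_mem_nhdsWithin] with z ⟨hz, hzt⟩
    have hpos : 0 < z - t := sub_pos.2 (lt_of_le_of_ne hz (Ne.symm hzt))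
    simp [slope_def_field, h0, abs_div, abs_of_pos hpos]
  · exact ⟨SignType.sign (g t), abs_sign_le_one _, sign_mul_self _,
      (hasDerivAt_abs h0).comp_hasDerivWithinAt t h⟩

namespace Matrix

variable {ι : Type*} [Fintype ι] {A : Matrix ι ι ℝ} {δ : ℝ}

theorem mul_sum_abs_le_dotProduct_mulVec (hoff : ∀ i j, i ≠ j → A i j ≤ 0)
    (hcol : ∀ j, δ ≤ ∑ i, A i j) {σ x : ι → ℝ} (hσ : ∀ i, |σ i| ≤ 1)
    (hσx : ∀ i, σ i * x i = |x i|) :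
    δ * ∑ i, |x i| ≤ σ ⬝ᵥ (A *ᵥ x) := by
  have hterm : ∀ i j, A i j * |x j| ≤ σ i * A i j * x j := by
    intro i j
    rcases eq_or_ne i j with rfl | hij
    · exact (by rw [← hσx]; ring : A i i * |x i| = _).le
    · have : σ i * x j ≤ |x j| := (le_abs_self _).trans
        (by rw [abs_mul]; exact mul_le_of_le_one_left (abs_nonneg _) (hσ i))
      nlinarith [hoff i j hij]
  calc δ * ∑ j, |x j| ≤ ∑ j, (∑ i, A i j) * |x j| := by
        rw [Finset.mul_sum]
        exact Finset.sum_le_sum fun j _ => mul_le_mul_of_nonneg_right (hcol j) (abs_nonneg _)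
    _ ≤ ∑ j, ∑ i, σ i * A i j * x j := by
        simp_rw [Finset.sum_mul]
        exact Finset.sum_le_sum fun j _ => Finset.sum_le_sum fun i _ => hterm i j
    _ = σ ⬝ᵥ (A *ᵥ x) := by
        simp only [dotProduct, mulVec, Finset.mul_sum, mul_assoc]
        exact Finset.sum_comm

theorem isUnit_of_colSum_pos [DecidableEq ι] (hoff : ∀ i j, i ≠ j → A i j ≤ 0)
    (hcol : ∀ j, δ ≤ ∑ i, A i j) (hδ : 0 < δ) : IsUnit A := by
  refine mulVec_injective_iff_isUnit.1 fun x y hxy => sub_eq_zero.1 ?_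
  set z := x - y
  have hz : A *ᵥ z = 0 := by rw [mulVec_sub, hxy, sub_self]
  have hle := mul_sum_abs_le_dotProduct_mulVec hoff hcol (fun i => abs_sign_le_one (z i))
    (fun i => sign_mul_self (z i))
  rw [hz, dotProduct_zero] at hle
  have hsum : ∑ i, |z i| = 0 :=
    le_antisymm (nonpos_of_mul_nonpos_right hle hδ) (Finset.sum_nonneg fun i _ => abs_nonneg _)
  funext i
  exact abs_eq_zero.1 ((Finset.sum_eq_zero_iff_of_nonneg fun i _ => abs_nonneg _).1 hsum i
    (Finset.mem_univ i))

theorem sum_abs_le_mul_exp_of_hasDerivWithinAt (hoff : ∀ i j, i ≠ j → A i j ≤ 0)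
    (hcol : ∀ j, δ ≤ ∑ i, A i j) {x : ℝ → ι → ℝ}
    (hx : ∀ t, 0 ≤ t → ∀ i, HasDerivWithinAt (fun τ => x τ i) (-(A *ᵥ x t) i) (Ici 0) t)
    {t : ℝ} (ht : 0 ≤ t) :
    ∑ i, |x t i| ≤ (∑ i, |x 0 i|) * Real.exp (-δ * t) := by
  have hderiv : ∀ s, 0 ≤ s → ∃ F, F ≤ -δ * ∑ i, |x s i| ∧
      HasDerivWithinAt (fun τ => ∑ i, |x τ i|) F (Ici s) s := by
    intro s hs
    choose σ hσ hσx hσd using fun i =>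
      exists_hasDerivWithinAt_abs_Ici ((hx s hs i).mono (Ici_subset_Ici.2 hs))
    refine ⟨σ ⬝ᵥ -(A *ᵥ x s), ?_, HasDerivWithinAt.fun_sum fun i _ => hσd i⟩
    have := mul_sum_abs_le_dotProduct_mulVec hoff hcol hσ hσx
    rw [dotProduct_neg]
    linarith
  choose! F hF hFd using hderiv
  have hcont : ContinuousOn (fun τ => ∑ i, |x τ i|) (Ici 0) :=
    continuousOn_finsetSum _ fun i _ =>
      ContinuousOn.abs fun s hs => (hx s hs i).continuousWithinAt
  have := le_gronwallBound_of_liminf_deriv_right_le (K := -δ) (ε := 0)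
    (hcont.mono Icc_subset_Ici_self) (fun s hs r hr => (hFd s hs.1).liminf_right_slope_le hr)
    le_rfl (fun s hs => (hF s hs.1).trans_eq (add_zero _).symm) t ⟨ht, le_rfl⟩
  rwa [sub_zero, gronwallBound_ε0] at this

theorem tendsto_zero_of_hasDerivWithinAt (hoff : ∀ i j, i ≠ j → A i j ≤ 0)
    (hcol : ∀ j, δ ≤ ∑ i, A i j) (hδ : 0 < δ) {x : ℝ → ι → ℝ}
    (hx : ∀ t, 0 ≤ t → ∀ i, HasDerivWithinAt (fun τ => x τ i) (-(A *ᵥ x t) i) (Ici 0) t) :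
    Tendsto x atTop (𝓝 0) := by
  have hexp : Tendsto (fun t => (∑ i, |x 0 i|) * Real.exp (-δ * t)) atTop (𝓝 0) := by
    simpa using (Real.tendsto_exp_atBot.comp
      (tendsto_id.const_mul_atTop_of_neg (neg_neg_iff_pos.2 hδ))).const_mul (∑ i, |x 0 i|)
  refine squeeze_zero_norm' ?_ hexp
  filter_upwards [eventually_ge_atTop 0] with t ht
  refine (pi_norm_le_iff_of_nonneg (by positivity)).2 fun i => ?_
  calc ‖x t i‖ ≤ ∑ j, |x t j| :=
        Finset.single_le_sum (f := fun j => |x t j|) (fun j _ => abs_nonneg _) (Finset.mem_univ i)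
    _ ≤ _ := sum_abs_le_mul_exp_of_hasDerivWithinAt hoff hcol hx ht

end Matrix

theorem cholera_total_population_convergence_general
    (n : ℕ)
    (M : Matrix (Fin n) (Fin n) ℝ)
    (hMoff : ∀ i j, i ≠ j → 0 ≤ M i j) (hMcol : ∀ j, ∑ i, M i j = 0)
    (dH : Fin n → ℝ) (hdH : ∀ i, 0 < dH i)
    (c : Fin n → ℝ) :
    IsUnit (Matrix.diagonal dH - M) ∧
    ∀ N : ℝ → Fin n → ℝ,
      (∀ t, 0 ≤ t → ∀ i, HasDerivWithinAt (fun τ => N τ i)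
        (c i - ((Matrix.diagonal dH - M).mulVec (N t)) i) (Set.Ici (0:ℝ)) t) →
      Tendsto N atTop (nhds ((Matrix.diagonal dH - M)⁻¹.mulVec c)) := by
  set A := diagonal dH - M
  have hoff : ∀ i j, i ≠ j → A i j ≤ 0 := fun i j hij => by
    simp [A, diagonal_apply_ne _ hij, hMoff i j hij]
  obtain ⟨δ, hδ, hδle⟩ := exists_pos_forall_le_of_pos hdH
  have hcol : ∀ j, δ ≤ ∑ i, A i j := fun j => by
    simpa [A, Finset.sum_sub_distrib, hMcol, diagonal_apply] using hδle j
  have hA : IsUnit A := isUnit_of_colSum_pos hoff hcol hδ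
  refine ⟨hA, fun N hN => ?_⟩
  have hAc : A *ᵥ (A⁻¹ *ᵥ c) = c := by
    rw [mulVec_mulVec, mul_nonsing_inv _ ((isUnit_iff_isUnit_det A).1 hA), one_mulVec]
  have hdev : Tendsto (fun t => N t - A⁻¹ *ᵥ c) atTop (𝓝 0) :=
    tendsto_zero_of_hasDerivWithinAt hoff hcol hδ fun t ht i => by
      refine ((hN t ht i).sub_const ((A⁻¹ *ᵥ c) i)).congr_deriv ?_
      rw [mulVec_sub, hAc]
      simp
  simpa using hdev.add_const (A⁻¹ *ᵥ c)

/-- Convergence of the total human population under equal movement rates: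
`D - M` is invertible and every solution of `N' = c - (D - M) N` converges
to `(D - M)⁻¹ c`. -/
theorem cholera_total_population_convergence
    (n : ℕ) (hn : 1 ≤ n)
    (M : Matrix (Fin n) (Fin n) ℝ)
    (hMoff : ∀ i j, i ≠ j → 0 ≤ M i j) (hMcol : ∀ j, ∑ i, M i j = 0)
    (dH : Fin n → ℝ) (hdH : ∀ i, 0 < dH i)
    (c : Fin n → ℝ) :
    IsUnit (Matrix.diagonal dH - M) ∧
    ∀ N : ℝ → Fin n → ℝ,
      (∀ t, 0 ≤ t → ∀ i, HasDerivWithinAt (fun τ => N τ i)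
        (c i - ((Matrix.diagonal dH - M).mulVec (N t)) i) (Set.Ici (0:ℝ)) t) →
      Tendsto N atTop (nhds ((Matrix.diagonal dH - M)⁻¹.mulVec c)) :=
  cholera_total_population_convergence_general n M hMoff hMcol dH hdH c
end

section
/- The disease-free Jacobian has negative spectral abscissa: Let n ≥ 1, let M^S and M^R be n×n real movement matrices (nonnegative off-diagonal entries and zero column sums), and let v = diag(v_1,…,v_n), ε = diag(ε_1,…,ε_n), D = diag(d_1^H,…,d_n^H) be diagonal matrices with v_i ≥ 0, ε_i ≥ 0 and d_i^H > 0 for all i. Then every eigenvalue μ ∈ ℂ of the 2n×2n block matrix J = [[M^S − v − D, ε], [v, M^R − ε − D]] satisfies Re(μ) < 0. -/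
/-!
Every column of the Jacobian sums to `-dH j < 0` (movement conserves mass, and vaccination
and loss of immunity only transfer individuals between the `S` and `R` blocks), and all its
off-diagonal entries are nonnegative. For `μ` with `0 ≤ re μ`, the matrix `μ - J` is then
strictly diagonally dominant by columns, hence invertible by Gershgorin's theorem.
-/

open Matrix

theorem Matrix.re_lt_zero_of_mem_spectrum_of_sum_col_neg {m : Type*} [Fintype m] [DecidableEq m]
    (A : Matrix m m ℝ) (hoff : ∀ i j, i ≠ j → 0 ≤ A i j) (hcol : ∀ j, ∑ i, A i j < 0)
    {μ : ℂ} (hμ : μ ∈ spectrum ℂ (A.map Complex.ofReal)) : μ.re < 0 := by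
  by_contra! hre
  set N := algebraMap ℂ (Matrix m m ℂ) μ - A.map Complex.ofReal with hN
  refine hμ ((isUnit_iff_isUnit_det N).mpr (isUnit_iff_ne_zero.mpr
    (det_ne_zero_of_sum_col_lt_diag fun k ↦ ?_)))
  have hoff_norm : ∀ i, i ≠ k → ‖N i k‖ = A i k := fun i hik ↦ by
    simp [hN, algebraMap_eq_diagonal, hik, abs_of_nonneg (hoff i k hik)]
  calc ∑ i ∈ Finset.univ.erase k, ‖N i k‖
      = ∑ i, A i k - A k k := by
        rw [Finset.sum_congr rfl fun i hi ↦ hoff_norm i (Finset.ne_of_mem_erase hi),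
          Finset.sum_erase_eq_sub (Finset.mem_univ k)]
    _ < μ.re - A k k := by linarith [hcol k]
    _ = (μ - A k k).re := by simp
    _ ≤ ‖μ - A k k‖ := Complex.re_le_norm _
    _ = ‖N k k‖ := by simp [hN, algebraMap_eq_diagonal]

theorem Matrix.fromBlocks_nonneg_of_ne {l m : Type*} {A : Matrix l l ℝ} {B : Matrix l m ℝ}
    {C : Matrix m l ℝ} {D : Matrix m m ℝ} (hA : ∀ i j, i ≠ j → 0 ≤ A i j) (hB : ∀ i j, 0 ≤ B i j)
    (hC : ∀ i j, 0 ≤ C i j) (hD : ∀ i j, i ≠ j → 0 ≤ D i j) :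
    ∀ i j, i ≠ j → 0 ≤ fromBlocks A B C D i j := by
  rintro (i | i) (j | j) hij
  · exact hA i j (fun h ↦ hij (h ▸ rfl))
  · exact hB i j
  · exact hC i j
  · exact hD i j (fun h ↦ hij (h ▸ rfl))

theorem Matrix.sub_diagonal_nonneg_of_ne {m : Type*} [DecidableEq m] {A : Matrix m m ℝ}
    (hA : ∀ i j, i ≠ j → 0 ≤ A i j) (d : m → ℝ) :
    ∀ i j, i ≠ j → 0 ≤ (A - diagonal d) i j := fun i j hij ↦ by
  simpa [diagonal_apply_ne _ hij] using hA i j hij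

theorem Matrix.diagonal_nonneg {m : Type*} [DecidableEq m] {d : m → ℝ} (hd : ∀ i, 0 ≤ d i) :
    ∀ i j, 0 ≤ diagonal d i j := fun i j ↦ by
  rcases eq_or_ne i j with rfl | hij
  · simpa using hd i
  · simp [diagonal_apply_ne _ hij]

theorem cholera_disease_free_jacobian_spectral_abscissa_neg_general
    (n : ℕ)
    (MS MR : Matrix (Fin n) (Fin n) ℝ)
    (hMSoff : ∀ i j, i ≠ j → 0 ≤ MS i j) (hMScol : ∀ j, ∑ i, MS i j = 0)
    (hMRoff : ∀ i j, i ≠ j → 0 ≤ MR i j) (hMRcol : ∀ j, ∑ i, MR i j = 0)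
    (v ε dH : Fin n → ℝ)
    (hv : ∀ i, 0 ≤ v i) (hε : ∀ i, 0 ≤ ε i) (hdH : ∀ i, 0 < dH i) :
    ∀ μ ∈ spectrum ℂ
      ((Matrix.fromBlocks
        (MS - Matrix.diagonal v - Matrix.diagonal dH) (Matrix.diagonal ε)
        (Matrix.diagonal v) (MR - Matrix.diagonal ε - Matrix.diagonal dH)).map
          Complex.ofReal),
      μ.re < 0 := by
  intro μ hμ
  refine re_lt_zero_of_mem_spectrum_of_sum_col_neg _ ?_ ?_ hμ
  · exact fromBlocks_nonneg_of_ne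
      (sub_diagonal_nonneg_of_ne (sub_diagonal_nonneg_of_ne hMSoff v) dH) (diagonal_nonneg hε)
      (diagonal_nonneg hv) (sub_diagonal_nonneg_of_ne (sub_diagonal_nonneg_of_ne hMRoff ε) dH)
  · have hsum_diagonal (w : Fin n → ℝ) (j : Fin n) : ∑ i, diagonal w i j = w j := by
      simp [diagonal_apply]
    rintro (j | j) <;>
      simp only [Fintype.sum_sum_type, fromBlocks_apply₁₁, fromBlocks_apply₂₁, fromBlocks_apply₁₂,
        fromBlocks_apply₂₂, Matrix.sub_apply, Finset.sum_sub_distrib, hMScol, hMRcol, hsum_diagonal] <;>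
      linarith [hdH j]

/-- The disease-free Jacobian of the cholera metapopulation model has
negative spectral abscissa: every complex eigenvalue of the block matrix
`[[M^S - v - D, ε], [v, M^R - ε - D]]` has negative real part. -/
theorem cholera_disease_free_jacobian_spectral_abscissa_neg
    (n : ℕ) (hn : 1 ≤ n)
    (MS MR : Matrix (Fin n) (Fin n) ℝ)
    (hMSoff : ∀ i j, i ≠ j → 0 ≤ MS i j) (hMScol : ∀ j, ∑ i, MS i j = 0)
    (hMRoff : ∀ i j, i ≠ j → 0 ≤ MR i j) (hMRcol : ∀ j, ∑ i, MR i j = 0)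
    (v ε dH : Fin n → ℝ)
    (hv : ∀ i, 0 ≤ v i) (hε : ∀ i, 0 ≤ ε i) (hdH : ∀ i, 0 < dH i) :
    ∀ μ ∈ spectrum ℂ
      ((Matrix.fromBlocks
        (MS - Matrix.diagonal v - Matrix.diagonal dH) (Matrix.diagonal ε)
        (Matrix.diagonal v) (MR - Matrix.diagonal ε - Matrix.diagonal dH)).map
          Complex.ofReal),
      μ.re < 0 :=
  cholera_disease_free_jacobian_spectral_abscissa_neg_general n MS MR hMSoff hMScol hMRoff hMRcol v
    ε dH hv hε hdH
end

section
/- Invertibility and inverse-nonnegativity of the disease-free-equilibrium matrix: Let n ≥ 1, let M^S and M^R be n×n real movement matrices (nonnegative off-diagonal entries and zero column sums), and let v = diag(v_1,…,v_n), ε = diag(ε_1,…,ε_n), D = diag(d_1^H,…,d_n^H) with v_i ≥ 0, ε_i ≥ 0 and d_i^H > 0 for all i. Then the 2n×2n block matrix Σ_DFE = [[v + D − M^S, −ε], [−v, ε + D − M^R]] is invertible and every entry of Σ_DFE^{-1} is nonnegative. -/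
/-- A Z-matrix (nonpositive off-diagonal entries) with strictly positive row
sums maps vectors with nonnegative image to nonnegative vectors. -/
lemma zmatrix_mulVec_nonneg {m : Type*} [Fintype m] (B : Matrix m m ℝ)
    (hoff : ∀ i j, i ≠ j → B i j ≤ 0) (hrow : ∀ i, 0 < ∑ j, B i j)
    (y : m → ℝ) (h : ∀ k, 0 ≤ B.mulVec y k) : ∀ k, 0 ≤ y k := by
  intro k
  obtain ⟨k₀, -, hk₀⟩ := Finset.exists_min_image Finset.univ y ⟨k, Finset.mem_univ k⟩
  have hk₀nn : 0 ≤ y k₀ := by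
    by_contra hneg
    push_neg at hneg
    have hle : ∀ j ∈ Finset.univ, B k₀ j * y j ≤ B k₀ j * y k₀ := by
      intro j _
      rcases eq_or_ne j k₀ with rfl | hne
      · exact le_rfl
      · exact mul_le_mul_of_nonpos_left (hk₀ j (Finset.mem_univ j)) (hoff k₀ j hne.symm)
    have h1 : B.mulVec y k₀ ≤ (∑ j, B k₀ j) * y k₀ := by
      have := Finset.sum_le_sum hle
      simpa [Matrix.mulVec, dotProduct, Finset.sum_mul] using this
    have h2 : (∑ j, B k₀ j) * y k₀ < 0 := mul_neg_of_pos_of_neg (hrow k₀) hneg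
    exact absurd (h k₀) (by linarith)
  exact le_trans hk₀nn (hk₀ k (Finset.mem_univ k))

/-- Invertibility and inverse-nonnegativity of the disease-free-equilibrium
matrix `Σ_DFE = [[v + D - M^S, -ε], [-v, ε + D - M^R]]`. -/
theorem cholera_DFE_matrix_invertible_inverse_nonneg
    (n : ℕ) (hn : 1 ≤ n)
    (MS MR : Matrix (Fin n) (Fin n) ℝ)
    (hMSoff : ∀ i j, i ≠ j → 0 ≤ MS i j) (hMScol : ∀ j, ∑ i, MS i j = 0)
    (hMRoff : ∀ i j, i ≠ j → 0 ≤ MR i j) (hMRcol : ∀ j, ∑ i, MR i j = 0)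
    (v ε dH : Fin n → ℝ)
    (hv : ∀ i, 0 ≤ v i) (hε : ∀ i, 0 ≤ ε i) (hdH : ∀ i, 0 < dH i) :
    let Sdfe : Matrix (Fin n ⊕ Fin n) (Fin n ⊕ Fin n) ℝ :=
      Matrix.fromBlocks
        (Matrix.diagonal v + Matrix.diagonal dH - MS) (-(Matrix.diagonal ε))
        (-(Matrix.diagonal v)) (Matrix.diagonal ε + Matrix.diagonal dH - MR)
    IsUnit Sdfe ∧ ∀ i j, 0 ≤ Sdfe⁻¹ i j := by
  intro Sdfe
  -- off-diagonal entries of Sdfe are nonpositive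
  have hoff : ∀ i j, i ≠ j → Sdfe i j ≤ 0 := by
    rintro (i | i) (j | j) hij <;>
      simp only [Sdfe, Matrix.fromBlocks_apply₁₁, Matrix.fromBlocks_apply₁₂,
        Matrix.fromBlocks_apply₂₁, Matrix.fromBlocks_apply₂₂, Matrix.sub_apply,
        Matrix.add_apply, Matrix.neg_apply]
    · have hij' : i ≠ j := fun h => hij (by rw [h])
      rw [Matrix.diagonal_apply_ne _ hij', Matrix.diagonal_apply_ne _ hij']
      simpa using hMSoff i j hij'
    · rcases eq_or_ne i j with rfl | hij'
      · simpa using hε i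
      · simp [Matrix.diagonal_apply_ne _ hij']
    · rcases eq_or_ne i j with rfl | hij'
      · simpa using hv i
      · simp [Matrix.diagonal_apply_ne _ hij']
    · have hij' : i ≠ j := fun h => hij (by rw [h])
      rw [Matrix.diagonal_apply_ne _ hij', Matrix.diagonal_apply_ne _ hij']
      simpa using hMRoff i j hij'
  -- column sums of Sdfe are positive
  have hdiagsum : ∀ (w : Fin n → ℝ) (j : Fin n), ∑ i, Matrix.diagonal w i j = w j := by
    intro w j
    rw [Finset.sum_eq_single j (fun i _ hij => Matrix.diagonal_apply_ne _ hij)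
      (fun h => absurd (Finset.mem_univ j) h)]
    simp
  have hcol : ∀ j, 0 < ∑ i, Sdfe i j := by
    rintro (j | j) <;>
      rw [Fintype.sum_sum_type] <;>
      simp only [Sdfe, Matrix.fromBlocks_apply₁₁, Matrix.fromBlocks_apply₁₂,
        Matrix.fromBlocks_apply₂₁, Matrix.fromBlocks_apply₂₂, Matrix.sub_apply,
        Matrix.add_apply, Matrix.neg_apply, Finset.sum_add_distrib, Finset.sum_sub_distrib,
        Finset.sum_neg_distrib]
    · rw [hMScol, hdiagsum, hdiagsum]; linarith [hdH j]
    · rw [hMRcol, hdiagsum, hdiagsum]; linarith [hdH j]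
  -- the transpose is a Z-matrix with positive row sums
  have hToff : ∀ i j, i ≠ j → Sdfe.transpose i j ≤ 0 := fun i j hij => hoff j i hij.symm
  have hTrow : ∀ i, 0 < ∑ j, Sdfe.transpose i j := fun i => hcol i
  -- invertibility
  have hzero : ∀ w : (Fin n ⊕ Fin n) → ℝ, Sdfe.transpose.mulVec w = 0 → w = 0 := by
    intro w hw
    have h1 := zmatrix_mulVec_nonneg _ hToff hTrow w
      (fun k => by rw [hw]; exact le_rfl)
    have h2 := zmatrix_mulVec_nonneg _ hToff hTrow (-w)
      (fun k => by rw [Matrix.mulVec_neg, hw]; simp)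
    funext k
    have := h2 k
    simp only [Pi.neg_apply] at this
    have := h1 k
    simp only [Pi.zero_apply]
    linarith [h1 k, h2 k, (by simp : (-w) k = -(w k))]
  have hinj : Function.Injective Sdfe.transpose.mulVec := by
    intro y z hyz
    have := hzero (y - z) (by rw [Matrix.mulVec_sub, hyz, sub_self])
    exact sub_eq_zero.mp this
  have hunit : IsUnit Sdfe := by
    rw [← Matrix.isUnit_transpose]
    exact Matrix.mulVec_injective_iff_isUnit.mp hinj
  refine ⟨hunit, ?_⟩
  intro i j
  have hAAinv : Sdfe⁻¹ * Sdfe = 1 :=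
    Matrix.nonsing_inv_mul _ (Matrix.isUnit_iff_isUnit_det _ |>.mp hunit)
  have key := zmatrix_mulVec_nonneg Sdfe.transpose hToff hTrow (fun k => Sdfe⁻¹ i k) ?_ j
  · exact key
  · intro k
    have : Sdfe.transpose.mulVec (fun k => Sdfe⁻¹ i k) k = (Sdfe⁻¹ * Sdfe) i k := by
      simp [Matrix.mulVec, dotProduct, Matrix.mul_apply, Matrix.transpose_apply,
        mul_comm]
    rw [this, hAAinv]
    rcases eq_or_ne i k with rfl | h
    · simp
    · simp [Matrix.one_apply_ne h]
end

section
/- Asymptotic upper bound for the susceptible population of an isolated patch: Let b ≥ 0, d^H > 0, v ≥ 0, ε ≥ 0, γ ≥ 0, δ ≥ 0, ζ ≥ 0, d^C > 0, β^I ≥ 0, β^W ≥ 0, and let (S, I, R, W) : [0,∞) → ℝ^4 be a differentiable solution of the isolated-patch cholera system with S(t) ≥ 0, I(t) ≥ 0, W(t) ≥ 0 and R(t) ≤ b/d^H for all t ≥ 0. Then limsup_{t→∞} S(t) ≤ (b/(v + d^H)) · (1 + ε/d^H). -/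
/-!
Since the force of infection is nonnegative and `R ≤ b / dH`, the susceptible class obeys the
linear differential inequality `S' ≤ (v + dH) (M - S)` with `M = b / (v + dH) · (1 + ε / dH)`.
Comparison with the solution of the linear equation gives `S t ≤ M + (S 0 - M) e^{-(v + dH) t}`,
and the right-hand side tends to `M`.
-/

open Filter Real Set Topology

theorem le_add_sub_mul_exp_neg_mul_of_hasDerivWithinAt {f f' : ℝ → ℝ} {k M : ℝ}
    (hf : ∀ t, 0 ≤ t → HasDerivWithinAt f (f' t) (Ici 0) t)
    (hf' : ∀ t, 0 ≤ t → f' t ≤ k * (M - f t)) {x : ℝ} (hx : 0 ≤ x) :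
    f x ≤ M + (f 0 - M) * exp (-k * x) := by
  have hcont : ContinuousOn (fun t => f t - M) (Icc 0 x) := fun t ht =>
    ((hf t ht.1).continuousWithinAt.mono Icc_subset_Ici_self).sub continuousWithinAt_const
  have hslope : ∀ t ∈ Ico 0 x, ∀ r, f' t < r →
      ∃ᶠ z in 𝓝[>] t, (z - t)⁻¹ * ((f z - M) - (f t - M)) < r := fun t ht _ hr =>
    (((hf t ht.1).mono (Ici_subset_Ici.2 ht.1)).sub_const M).liminf_right_slope_le hr
  have hgronwall := le_gronwallBound_of_liminf_deriv_right_le (K := -k) (ε := 0) hcont hslope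
    le_rfl (fun t ht => by linarith [hf' t ht.1]) x ⟨hx, le_rfl⟩
  rw [gronwallBound_ε0, sub_zero] at hgronwall
  linarith

theorem tendsto_add_mul_exp_neg_mul_atTop {k : ℝ} (hk : 0 < k) (M C : ℝ) :
    Tendsto (fun x => M + C * exp (-k * x)) atTop (𝓝 M) := by
  have hexp : Tendsto (fun x => exp (-k * x)) atTop (𝓝 0) :=
    tendsto_exp_atBot.comp (tendsto_id.const_mul_atTop_of_neg (neg_neg_of_pos hk))
  simpa using (hexp.const_mul C).const_add M

theorem limsup_le_of_eventually_le_add_mul_exp_neg_mul {f : ℝ → ℝ} {k M C : ℝ} (hk : 0 < k)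
    (hf : IsCoboundedUnder (· ≤ ·) atTop f)
    (hle : ∀ᶠ x in atTop, f x ≤ M + C * exp (-k * x)) :
    limsup f atTop ≤ M := by
  have htendsto := tendsto_add_mul_exp_neg_mul_atTop hk M C
  calc limsup f atTop ≤ limsup (fun x => M + C * exp (-k * x)) atTop :=
        limsup_le_limsup hle hf htendsto.isBoundedUnder_le
    _ = M := htendsto.limsup_eq

theorem susceptible_rhs_le {b dH v ε F S R : ℝ} (hdH : 0 < dH) (hv : 0 ≤ v) (hε : 0 ≤ ε)
    (hFS : 0 ≤ F * S) (hR : R ≤ b / dH) :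
    b + ε * R - F * S - (v + dH) * S ≤ (v + dH) * (b / (v + dH) * (1 + ε / dH) - S) := by
  have hM : (v + dH) * (b / (v + dH) * (1 + ε / dH)) = b + ε * (b / dH) := by
    field_simp
  nlinarith [mul_le_mul_of_nonneg_left hR hε]

theorem cholera_isolated_patch_susceptible_limsup_bound_general
    (b dH v ε βI βW : ℝ)
    (hdH : 0 < dH) (hv : 0 ≤ v) (hε : 0 ≤ ε) (hβI : 0 ≤ βI) (hβW : 0 ≤ βW)
    (S I R W : ℝ → ℝ)
    (hS : ∀ t, 0 ≤ t → HasDerivWithinAt S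
      (b + ε * R t - (βI * I t + βW * W t) * S t - (v + dH) * S t)
      (Set.Ici (0:ℝ)) t)
    (hSnn : ∀ t, 0 ≤ t → 0 ≤ S t)
    (hInn : ∀ t, 0 ≤ t → 0 ≤ I t)
    (hWnn : ∀ t, 0 ≤ t → 0 ≤ W t)
    (hRub : ∀ t, 0 ≤ t → R t ≤ b / dH) :
    limsup S atTop ≤ (b / (v + dH)) * (1 + ε / dH) := by
  have hk : 0 < v + dH := by positivity
  have hinfection : ∀ t, 0 ≤ t → 0 ≤ (βI * I t + βW * W t) * S t := fun t ht => by
    have := hInn t ht; have := hWnn t ht; have := hSnn t ht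
    positivity
  have hcomparison : ∀ x, 0 ≤ x → S x ≤ b / (v + dH) * (1 + ε / dH) +
      (S 0 - b / (v + dH) * (1 + ε / dH)) * exp (-(v + dH) * x) := fun x hx =>
    le_add_sub_mul_exp_neg_mul_of_hasDerivWithinAt hS
      (fun t ht => susceptible_rhs_le hdH hv hε (hinfection t ht) (hRub t ht)) hx
  exact limsup_le_of_eventually_le_add_mul_exp_neg_mul hk
    (isCoboundedUnder_le_of_eventually_le atTop (eventually_atTop.2 ⟨0, hSnn⟩))
    (eventually_atTop.2 ⟨0, hcomparison⟩)

/-- Asymptotic upper bound for the susceptible population of an isolated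
patch of the cholera model. -/
theorem cholera_isolated_patch_susceptible_limsup_bound
    (b dH v ε γ δ ζ dC βI βW : ℝ)
    (hb : 0 ≤ b) (hdH : 0 < dH) (hv : 0 ≤ v) (hε : 0 ≤ ε) (hγ : 0 ≤ γ)
    (hδ : 0 ≤ δ) (hζ : 0 ≤ ζ) (hdC : 0 < dC) (hβI : 0 ≤ βI) (hβW : 0 ≤ βW)
    (S I R W : ℝ → ℝ)
    (hS : ∀ t, 0 ≤ t → HasDerivWithinAt S
      (b + ε * R t - (βI * I t + βW * W t) * S t - (v + dH) * S t)
      (Set.Ici (0:ℝ)) t)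
    (hI : ∀ t, 0 ≤ t → HasDerivWithinAt I
      ((βI * I t + βW * W t) * S t - (γ + δ + dH) * I t) (Set.Ici (0:ℝ)) t)
    (hR : ∀ t, 0 ≤ t → HasDerivWithinAt R
      (γ * I t + v * S t - (ε + dH) * R t) (Set.Ici (0:ℝ)) t)
    (hW : ∀ t, 0 ≤ t → HasDerivWithinAt W
      (ζ * I t - dC * W t) (Set.Ici (0:ℝ)) t)
    (hSnn : ∀ t, 0 ≤ t → 0 ≤ S t)
    (hInn : ∀ t, 0 ≤ t → 0 ≤ I t)
    (hWnn : ∀ t, 0 ≤ t → 0 ≤ W t)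
    (hRub : ∀ t, 0 ≤ t → R t ≤ b / dH) :
    limsup S atTop ≤ (b / (v + dH)) * (1 + ε / dH) :=
  cholera_isolated_patch_susceptible_limsup_bound_general b dH v ε βI βW hdH hv hε hβI hβW S I R W
    hS hSnn hInn hWnn hRub
end

section
/- Lyapunov derivative estimate for a single patch: Let b ≥ 0, d^H > 0, v ≥ 0, ε ≥ 0, γ ≥ 0, δ ≥ 0, ζ > 0, d^C > 0, β^I ≥ 0, β^W ≥ 0. Set b* = b(1 + ε/d^H) and f = ((v + d^H)(γ + δ + d^H) − β^I b*) / (ζ (v + d^H)). Then for all real S, I, W with S ≥ 0, I ≥ 0, W ≥ 0 and S ≤ b*/(v + d^H), one has (β^I I + β^W W)S − (γ + δ + d^H)I + f(ζ I − d^C W) ≤ (β^W b*/(v + d^H) − d^C f)·W. Moreover β^W b*/(v + d^H) − d^C f = (d^C(γ + δ + d^H)/ζ) · ( b*(d^C β^I + ζ β^W) / (d^C (v + d^H)(γ + δ + d^H)) − 1 ); in particular the right-hand side is nonpositive whenever b*(d^C β^I + ζ β^W) ≤ d^C (v + d^H)(γ + δ + d^H) and W ≥ 0. -/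
/-!
The weight `f` of `L = I + f W` is chosen so that `f ζ = (γ + δ + dH) - βI b*/(v + dH)`. Bounding
`S` by `b*/(v + dH)` in the incidence term, the coefficient of `I` in `L'` then vanishes and only
the `W`-term survives. Its coefficient is `dC (γ + δ + dH)/ζ · (R₀ - 1)` with
`R₀ = b* (dC βI + ζ βW) / (dC (v + dH) (γ + δ + dH))`, hence nonpositive when `R₀ ≤ 1`.
-/

section LyapunovCoefficients

variable {c Γ ζ dC βI βW B : ℝ}

lemma lyapunov_weight_mul_shedding (hc : c ≠ 0) (hζ : ζ ≠ 0) :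
    (c * Γ - βI * B) / (ζ * c) * ζ = Γ - βI * (B / c) := by
  field_simp

lemma lyapunov_derivative_le_of_weight {S s I W f : ℝ} (hβI : 0 ≤ βI) (hβW : 0 ≤ βW)
    (hI : 0 ≤ I) (hW : 0 ≤ W) (hS : S ≤ s) (hf : f * ζ = Γ - βI * s) :
    (βI * I + βW * W) * S - Γ * I + f * (ζ * I - dC * W) ≤ (βW * s - dC * f) * W := by
  have hinc : (βI * I + βW * W) * S ≤ (βI * I + βW * W) * s :=
    mul_le_mul_of_nonneg_left hS (by positivity)
  calc (βI * I + βW * W) * S - Γ * I + f * (ζ * I - dC * W)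
      ≤ (βI * I + βW * W) * s - Γ * I + f * ζ * I - dC * f * W := by linarith
    _ = (βW * s - dC * f) * W := by rw [hf]; ring

lemma bacterial_coefficient_eq (hc : c ≠ 0) (hΓ : Γ ≠ 0) (hζ : ζ ≠ 0) (hdC : dC ≠ 0) :
    βW * B / c - dC * ((c * Γ - βI * B) / (ζ * c)) =
      dC * Γ / ζ * (B * (dC * βI + ζ * βW) / (dC * c * Γ) - 1) := by
  field_simp
  ring

end LyapunovCoefficients

theorem cholera_single_patch_lyapunov_derivative_estimate_general
    (b dH v ε γ δ ζ dC βI βW : ℝ)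
    (hdH : 0 < dH) (hv : 0 ≤ v) (hγ : 0 ≤ γ)
    (hδ : 0 ≤ δ) (hζ : 0 < ζ) (hdC : 0 < dC) (hβI : 0 ≤ βI) (hβW : 0 ≤ βW) :
    let bstar : ℝ := b * (1 + ε / dH)
    let f : ℝ := ((v + dH) * (γ + δ + dH) - βI * bstar) / (ζ * (v + dH))
    (∀ S I W : ℝ, 0 ≤ S → 0 ≤ I → 0 ≤ W → S ≤ bstar / (v + dH) →
      (βI * I + βW * W) * S - (γ + δ + dH) * I + f * (ζ * I - dC * W) ≤
        (βW * bstar / (v + dH) - dC * f) * W) ∧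
    βW * bstar / (v + dH) - dC * f =
      (dC * (γ + δ + dH) / ζ) *
        (bstar * (dC * βI + ζ * βW) / (dC * (v + dH) * (γ + δ + dH)) - 1) ∧
    (∀ W : ℝ, 0 ≤ W →
      bstar * (dC * βI + ζ * βW) ≤ dC * (v + dH) * (γ + δ + dH) →
      (βW * bstar / (v + dH) - dC * f) * W ≤ 0) := by
  intro bstar f
  have hc : 0 < v + dH := by linarith
  have hΓ : 0 < γ + δ + dH := by linarith
  have hcoeff := bacterial_coefficient_eq (βW := βW) (βI := βI) (B := bstar)
    hc.ne' hΓ.ne' hζ.ne' hdC.ne'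
  refine ⟨fun S I W _ hI hW hS => ?_, hcoeff, fun W hW hR₀ => ?_⟩
  · rw [mul_div_assoc]
    exact lyapunov_derivative_le_of_weight hβI hβW hI hW hS
      (lyapunov_weight_mul_shedding hc.ne' hζ.ne')
  · have hR₀_le_one : bstar * (dC * βI + ζ * βW) / (dC * (v + dH) * (γ + δ + dH)) ≤ 1 :=
      div_le_one_of_le₀ hR₀ (by positivity)
    rw [hcoeff]
    exact mul_nonpos_of_nonpos_of_nonneg
      (mul_nonpos_of_nonneg_of_nonpos (by positivity) (by linarith)) hW

/-- Lyapunov derivative estimate for a single patch of the cholera model. -/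
theorem cholera_single_patch_lyapunov_derivative_estimate
    (b dH v ε γ δ ζ dC βI βW : ℝ)
    (hb : 0 ≤ b) (hdH : 0 < dH) (hv : 0 ≤ v) (hε : 0 ≤ ε) (hγ : 0 ≤ γ)
    (hδ : 0 ≤ δ) (hζ : 0 < ζ) (hdC : 0 < dC) (hβI : 0 ≤ βI) (hβW : 0 ≤ βW) :
    let bstar : ℝ := b * (1 + ε / dH)
    let f : ℝ := ((v + dH) * (γ + δ + dH) - βI * bstar) / (ζ * (v + dH))
    (∀ S I W : ℝ, 0 ≤ S → 0 ≤ I → 0 ≤ W → S ≤ bstar / (v + dH) →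
      (βI * I + βW * W) * S - (γ + δ + dH) * I + f * (ζ * I - dC * W) ≤
        (βW * bstar / (v + dH) - dC * f) * W) ∧
    βW * bstar / (v + dH) - dC * f =
      (dC * (γ + δ + dH) / ζ) *
        (bstar * (dC * βI + ζ * βW) / (dC * (v + dH) * (γ + δ + dH)) - 1) ∧
    (∀ W : ℝ, 0 ≤ W →
      bstar * (dC * βI + ζ * βW) ≤ dC * (v + dH) * (γ + δ + dH) →
      (βW * bstar / (v + dH) - dC * f) * W ≤ 0) :=
  cholera_single_patch_lyapunov_derivative_estimate_general b dH v ε γ δ ζ dC βI βW hdH hv hγ hδ hζ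
    hdC hβI hβW
end
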